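/- Let θ := π/8 and set [m] := sin(mθ)/sin θ for m ∈ ℤ. Let M be the complex 4×4 matrix M := (1/[4]) · [[ [3], −1, −√[3], −√[3] ], [ −1, [3], i√[3], −i√[3] ], [ −√[3], −i√[3], [3], i ], [ −√[3], i√[3], −i, [3] ]], where i is the imaginary unit and √[3] is the real square root of [3]. Then M is Hermitian and M·M = [2]·M. -/

import Mathlib

/-- Trigonometric quantum integer `[m] = sin(m·π/8)/sin(π/8)`,
i.e. `[m]_q` at `q = e^{2πi/16}`. -/
noncomputable def qi8 (m : ℤ) : ℝ :=
  Real.sin (m * (Real.pi / 8)) / Real.sin (Real.pi / 8)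

/-- The 4×4 block U^4_{3} of the level-4 conformal-inclusion cell system. -/
noncomputable def U43 : Matrix (Fin 4) (Fin 4) ℂ :=
  ((1 / qi8 4 : ℝ) : ℂ) •
    !![((qi8 3 : ℝ) : ℂ), -1, (-(Real.sqrt (qi8 3)) : ℝ),
         ((-(Real.sqrt (qi8 3)) : ℝ) : ℂ);
       -1, ((qi8 3 : ℝ) : ℂ), Complex.I * ((Real.sqrt (qi8 3) : ℝ) : ℂ),
         -Complex.I * ((Real.sqrt (qi8 3) : ℝ) : ℂ);
       ((-(Real.sqrt (qi8 3)) : ℝ) : ℂ), -Complex.I * ((Real.sqrt (qi8 3) : ℝ) : ℂ),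
         ((qi8 3 : ℝ) : ℂ), Complex.I;
       ((-(Real.sqrt (qi8 3)) : ℝ) : ℂ), Complex.I * ((Real.sqrt (qi8 3) : ℝ) : ℂ),
         -Complex.I, ((qi8 3 : ℝ) : ℂ)]

/-!
Write `[m]` for the quantum integers at `θ = π/8`. The Chebyshev recursion
`[2][m] = [m-1] + [m+1]` and the symmetry `[8-m] = [m]` (as `8θ = π`) give
`[2][4] = [3] + [5] = 2[3]` and `[3]² = [1] + [3] + [5] = 2[3] + 1`.
Up to the real scalar `1/[4]`, `U43` is a block `B` with diagonal `a = [3]` and off-diagonal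
entries among `±1, ±i, ±r, ±ir`, where `r = √[3]`; the relations `r² = a` and `a² = 2a + 1` give
`B² = 2a • B`, hence `U43² = [4]⁻² · 2[3] • B = [2] • U43` because `2[3] = [2][4]`.
-/

open Real

noncomputable def qint (θ : ℝ) (m : ℤ) : ℝ :=
  sin (m * θ) / sin θ

section QuantumInteger

variable {θ : ℝ}

theorem qint_one (hθ : sin θ ≠ 0) : qint θ 1 = 1 := by
  simp [qint, hθ]

theorem qint_two_mul (hθ : sin θ ≠ 0) (m : ℤ) :
    qint θ 2 * qint θ m = qint θ (m - 1) + qint θ (m + 1) := by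
  simp only [qint]
  push_cast
  rw [sub_mul, add_mul, one_mul, sin_sub, sin_add, two_mul, sin_add]
  field_simp
  ring

theorem qint_sub_of_mul_eq_pi {n : ℤ} (hn : n * θ = π) (m : ℤ) :
    qint θ (n - m) = qint θ m := by
  simp only [qint]
  push_cast
  rw [sub_mul, hn, sin_pi_sub]

theorem qint_pos (hθ : 0 < θ) {m : ℤ} (hm : 0 < m) (hmθ : m * θ < π) : 0 < qint θ m := by
  have hθπ : θ < π := by
    have : (1 : ℝ) ≤ m := by exact_mod_cast hm
    nlinarith
  exact div_pos (sin_pos_of_pos_of_lt_pi (by positivity) hmθ) (sin_pos_of_pos_of_lt_pi hθ hθπ)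

theorem qint_three_sq (hθ : sin θ ≠ 0) :
    qint θ 3 ^ 2 = 1 + qint θ 3 + qint θ 5 := by
  have h2 : qint θ 2 * qint θ 2 = 1 + qint θ 3 := by
    simpa [qint_one hθ] using qint_two_mul hθ 2
  have h3 : qint θ 2 * qint θ 3 = qint θ 2 + qint θ 4 := by simpa using qint_two_mul hθ 3
  have h4 : qint θ 2 * qint θ 4 = qint θ 3 + qint θ 5 := by simpa using qint_two_mul hθ 4
  linear_combination (1 - qint θ 3) * h2 + qint θ 2 * h3 + h4

end QuantumInteger

theorem qi8_eq_qint : qi8 = qint (π / 8) := rfl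

theorem qi8_pos {m : ℤ} (hm : 0 < m) (hm8 : m < 8) : 0 < qi8 m := by
  refine qint_pos (by positivity) hm ?_
  have : (m : ℝ) < 8 := by exact_mod_cast hm8
  nlinarith [pi_pos]

theorem sin_pi_div_eight_ne_zero : sin (π / 8) ≠ 0 :=
  (sin_pos_of_pos_of_lt_pi (by positivity) (by linarith [pi_pos])).ne'

theorem qi8_five : qi8 5 = qi8 3 :=
  qint_sub_of_mul_eq_pi (θ := π / 8) (n := 8) (by push_cast; ring) 3

theorem qi8_two_mul_qi8_four : qi8 2 * qi8 4 = 2 * qi8 3 := by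
  have h : qi8 2 * qi8 4 = qi8 3 + qi8 5 := by
    simpa [qi8_eq_qint] using qint_two_mul sin_pi_div_eight_ne_zero 4
  rw [h, qi8_five, two_mul]

theorem qi8_three_sq : qi8 3 ^ 2 = 2 * qi8 3 + 1 := by
  rw [qi8_eq_qint, qint_three_sq sin_pi_div_eight_ne_zero, ← qi8_eq_qint, qi8_five]
  ring

open Complex

def heckeBlock (a r : ℂ) : Matrix (Fin 4) (Fin 4) ℂ :=
  !![a, -1, -r, -r;
     -1, a, I * r, -I * r;
     -r, -I * r, a, I;
     -r, I * r, -I, a]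

theorem heckeBlock_isHermitian (a r : ℝ) : (heckeBlock a r).IsHermitian := by
  ext i j
  fin_cases i <;> fin_cases j <;> simp [heckeBlock]

theorem heckeBlock_mul_self {a r : ℂ} (hr : r ^ 2 = a) (ha : a ^ 2 = 2 * a + 1) :
    heckeBlock a r * heckeBlock a r = (2 * a) • heckeBlock a r := by
  ext i j
  fin_cases i <;> fin_cases j <;>
    simp only [heckeBlock, Matrix.mul_apply, Fin.sum_univ_four, Matrix.smul_apply, smul_eq_mul,
      Matrix.of_apply, Matrix.cons_val', Matrix.cons_val, Matrix.cons_val_fin_one, Fin.isValue,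
      Fin.mk_one, Fin.reduceFinMk, Fin.zero_eta] <;>
    grind [I_sq]

theorem U43_eq_smul_heckeBlock :
    U43 = ((1 / qi8 4 : ℝ) : ℂ) • heckeBlock (qi8 3) (√(qi8 3)) := by
  simp only [U43, heckeBlock, ofReal_neg]

/-- The 4×4 block U^4_3 is Hermitian and satisfies the Hecke relation. -/
theorem level4_fourByFour_hecke_block :
    U43.IsHermitian ∧ U43 * U43 = ((qi8 2 : ℝ) : ℂ) • U43 := by
  have hr : ((√(qi8 3) : ℝ) : ℂ) ^ 2 = qi8 3 := by
    rw [← ofReal_pow, sq_sqrt (qi8_pos (by norm_num) (by norm_num)).le]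
  have ha : ((qi8 3 : ℝ) : ℂ) ^ 2 = 2 * qi8 3 + 1 := by exact_mod_cast qi8_three_sq
  have hscalar : ((qi8 2 : ℝ) : ℂ) * qi8 4 = 2 * qi8 3 := by exact_mod_cast qi8_two_mul_qi8_four
  have h4 : ((qi8 4 : ℝ) : ℂ) ≠ 0 := by exact_mod_cast (qi8_pos (by norm_num) (by norm_num)).ne'
  rw [U43_eq_smul_heckeBlock]
  refine ⟨(heckeBlock_isHermitian _ _).smul (conj_ofReal _), ?_⟩
  rw [← mul_smul_mul_comm, heckeBlock_mul_self hr ha, smul_smul, smul_smul]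
  congr 1
  push_cast
  field_simp
  linear_combination -hscalar
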